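/- arXiv:2506.20630 — 2 statements merged into one kernel-verified Lean document; each statement's English description precedes it below -/
import Mathlib

section
/- Let β ≥ 1, γ > 0 with Lγ < β, let x, z ∈ X and u ∈ X, and define y := (1 − 1/β)x + (1/β)z. Let (Ω, μ) be a probability space and δ : Ω → ℝⁿ a measurable map with ∫ δ dμ = 0 and ∫ ‖δ‖² dμ < ∞. For each ω ∈ Ω set g(ω) := ∇φ(y) + δ(ω); let z⁺ : Ω → ℝⁿ be measurable with z⁺(ω) ∈ X satisfying γ(⟨g(ω), z⁺(ω)⟩ + ψ(z⁺(ω))) + ½‖z⁺(ω) − z‖² ≤ γ(⟨g(ω), v⟩ + ψ(v)) + ½‖v − z‖² for all v ∈ X; and set x⁺(ω) := (1 − 1/β)x + (1/β)z⁺(ω). Then ∫ [βγ(Φ(x⁺(ω)) − Φ(u)) + ½‖u − z⁺(ω)‖²] dμ(ω) ≤ (β − 1)γ(Φ(x) − Φ(u)) + ½‖u − z‖² + (βγ²/(2(β − Lγ)))·∫ ‖δ‖² dμ. -/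
open MeasureTheory RealInnerProductSpace Set Filter Topology

section Aux

variable {E : Type*} [NormedAddCommGroup E] [InnerProductSpace ℝ E] [CompleteSpace E]

/-- chain rule along a segment -/
lemma hasDerivAt_along {φ : E → ℝ} {g : E} {a v : E} {t : ℝ}
    (hg : HasGradientAt φ g (a + t • v)) :
    HasDerivAt (fun s : ℝ => φ (a + s • v)) ⟪g, v⟫ t := by
  have hc : HasDerivAt (fun s : ℝ => a + s • v) v t := by
    simpa using ((hasDerivAt_id t).smul_const v).const_add a
  have hf : HasFDerivAt φ (InnerProductSpace.toDual ℝ E g) (a + t • v) :=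
    hasGradientAt_iff_hasFDerivAt.mp hg
  have := hf.comp_hasDerivAt t hc
  exact this

/-- first-order condition for convexity -/
lemma grad_convex_le {φ : E → ℝ} (hφ : ConvexOn ℝ Set.univ φ)
    {p g : E} (hg : HasGradientAt φ g p) (w : E) :
    φ p + ⟪g, w - p⟫ ≤ φ w := by
  have hd : HasDerivAt (fun s : ℝ => φ (p + s • (w - p))) ⟪g, w - p⟫ 0 := by
    have : HasGradientAt φ g (p + (0:ℝ) • (w - p)) := by simpa using hg
    exact hasDerivAt_along this
  have hslope : Tendsto (slope (fun s : ℝ => φ (p + s • (w - p))) 0) (𝓝[>] (0:ℝ))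
      (𝓝 ⟪g, w - p⟫) :=
    (hasDerivAt_iff_tendsto_slope.mp hd).mono_left
      (nhdsWithin_mono _ fun x hx => ne_of_gt hx)
  have hev : ∀ᶠ t in 𝓝[>] (0:ℝ),
      slope (fun s : ℝ => φ (p + s • (w - p))) 0 t ≤ φ w - φ p := by
    filter_upwards [Ioc_mem_nhdsGT (zero_lt_one)] with t ht
    have hconv := hφ.2 (Set.mem_univ p) (Set.mem_univ w) (by linarith [ht.2] : (0:ℝ) ≤ 1 - t)
      (le_of_lt ht.1) (by ring)
    have hpt : p + t • (w - p) = (1 - t) • p + t • w := by module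
    have h2 : φ (p + t • (w - p)) ≤ (1 - t) * φ p + t * φ w := by rw [hpt]; simpa using hconv
    rw [slope_def_field]
    simp only [zero_smul, add_zero, sub_zero]
    rw [div_le_iff₀ ht.1]
    nlinarith [ht.1]
  have := le_of_tendsto hslope hev
  linarith

/-- descent lemma on a convex set with Lipschitz gradient -/
lemma descent_lemma {X : Set E} (hXconv : Convex ℝ X) {φ : E → ℝ}
    {φ' : E → E} (hφgrad : ∀ x, HasGradientAt φ (φ' x) x) {L : ℝ}
    (hLip : ∀ x ∈ X, ∀ y ∈ X, ‖φ' x - φ' y‖ ≤ L * ‖x - y‖)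
    {a b : E} (ha : a ∈ X) (hb : b ∈ X) :
    φ b ≤ φ a + ⟪φ' a, b - a⟫ + L / 2 * ‖b - a‖ ^ 2 := by
  set v := b - a with hv
  set H : ℝ → ℝ := fun t => φ (a + t • v) - t * ⟪φ' a, v⟫ - L * t ^ 2 / 2 * ‖v‖ ^ 2 with hH
  have hmem : ∀ t ∈ Icc (0:ℝ) 1, a + t • v ∈ X := by
    intro t ht
    have : a + t • v = (1 - t) • a + t • b := by rw [hv]; module
    rw [this]
    exact hXconv ha hb (by linarith [ht.2]) ht.1 (by ring)
  have hHd : ∀ t : ℝ, HasDerivAt H (⟪φ' (a + t • v), v⟫ - ⟪φ' a, v⟫ - L * t * ‖v‖ ^ 2) t := by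
    intro t
    have h1 : HasDerivAt (fun s : ℝ => φ (a + s • v)) ⟪φ' (a + t • v), v⟫ t :=
      hasDerivAt_along (hφgrad _)
    have h2 : HasDerivAt (fun s : ℝ => s * ⟪φ' a, v⟫) ⟪φ' a, v⟫ t := by
      simpa using (hasDerivAt_id t).mul_const ⟪φ' a, v⟫
    have h3 : HasDerivAt (fun s : ℝ => L * s ^ 2 / 2 * ‖v‖ ^ 2) (L * t * ‖v‖ ^ 2) t := by
      have := (((hasDerivAt_pow 2 t).const_mul L).div_const 2).mul_const (‖v‖ ^ 2)
      refine this.congr_deriv ?_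
      ring
    exact (h1.sub h2).sub h3
  have hanti : AntitoneOn H (Icc (0:ℝ) 1) := by
    apply antitoneOn_of_deriv_nonpos (convex_Icc 0 1)
    · exact fun t _ => ((hHd t).continuousAt).continuousWithinAt
    · exact fun t _ => ((hHd t).differentiableAt).differentiableWithinAt
    · intro t ht
      rw [interior_Icc] at ht
      rw [(hHd t).deriv]
      have hmt : a + t • v ∈ X := hmem t ⟨ht.1.le, ht.2.le⟩
      have hnorm : ‖a + t • v - a‖ = t * ‖v‖ := by
        simp [norm_smul, abs_of_nonneg ht.1.le]
      have hinner : ⟪φ' (a + t • v) - φ' a, v⟫ ≤ L * (t * ‖v‖) * ‖v‖ := by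
        calc ⟪φ' (a + t • v) - φ' a, v⟫ ≤ ‖φ' (a + t • v) - φ' a‖ * ‖v‖ :=
              real_inner_le_norm _ _
          _ ≤ L * (t * ‖v‖) * ‖v‖ := by
              apply mul_le_mul_of_nonneg_right _ (norm_nonneg v)
              rw [← hnorm]; exact hLip _ hmt _ ha
      rw [inner_sub_left] at hinner
      nlinarith [hinner]
  have h10 := hanti (Set.left_mem_Icc.mpr zero_le_one) (Set.right_mem_Icc.mpr zero_le_one)
    zero_le_one
  simp only [hH, zero_smul, add_zero, one_smul, zero_mul, one_mul, zero_pow, one_pow] at h10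
  have : a + v = b := by rw [hv]; module
  rw [this] at h10
  nlinarith [h10]

/-- three-point inequality for the prox step -/
lemma prox_three_point {X : Set E} (hXconv : Convex ℝ X) {f : E → ℝ} {z w v : E}
    (hw : w ∈ X) (hv : v ∈ X)
    (hfconv : ∀ t ∈ Icc (0:ℝ) 1, f ((1-t) • w + t • v) ≤ (1-t) * f w + t * f v)
    (hmin : ∀ q ∈ X, f w + ‖w - z‖ ^ 2 / 2 ≤ f q + ‖q - z‖ ^ 2 / 2) :
    f w + ‖w - z‖ ^ 2 / 2 + ‖v - w‖ ^ 2 / 2 ≤ f v + ‖v - z‖ ^ 2 / 2 := by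
  have key : ∀ t ∈ Ioc (0:ℝ) 1,
      f w + ‖w - z‖ ^ 2 / 2 + (1 - t) * ‖v - w‖ ^ 2 / 2 ≤ f v + ‖v - z‖ ^ 2 / 2 := by
    intro t ht
    have ht0 := ht.1
    have ht1 := ht.2
    have hct : (1-t) • w + t • v ∈ X := hXconv hw hv (by linarith) (by linarith) (by ring)
    have hq := hmin _ hct
    have hf := hfconv t ⟨ht0.le, ht1⟩
    have hid : ‖(1-t) • w + t • v - z‖ ^ 2
        = (1-t) * ‖w - z‖ ^ 2 + t * ‖v - z‖ ^ 2 - t * (1-t) * ‖v - w‖ ^ 2 := by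
      have h1 : (1-t) • w + t • v - z = (1-t) • (w - z) + t • (v - z) := by module
      have h2 : v - w = (v - z) - (w - z) := by module
      have e1 : ‖(1-t) • (w - z) + t • (v - z)‖ ^ 2
          = (1-t)^2 * ‖w - z‖ ^ 2 + 2 * ((1-t) * t) * ⟪w - z, v - z⟫ + t^2 * ‖v - z‖ ^ 2 := by
        rw [norm_add_sq_real, norm_smul, norm_smul, real_inner_smul_left,
          real_inner_smul_right, Real.norm_eq_abs, Real.norm_eq_abs,
          abs_of_nonneg (by linarith : (0:ℝ) ≤ 1 - t), abs_of_nonneg ht0.le]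
        ring
      have e2 : ‖(v - z) - (w - z)‖ ^ 2
          = ‖v - z‖ ^ 2 - 2 * ⟪w - z, v - z⟫ + ‖w - z‖ ^ 2 := by
        rw [norm_sub_sq_real, real_inner_comm (v - z) (w - z)]
      rw [h1, h2, e1, e2]
      ring
    rw [hid] at hq
    have hdiv : t * (f w + ‖w - z‖ ^ 2 / 2 + (1 - t) * ‖v - w‖ ^ 2 / 2)
        ≤ t * (f v + ‖v - z‖ ^ 2 / 2) := by nlinarith [hq, hf]
    exact le_of_mul_le_mul_left hdiv ht0
  have htend : Tendsto (fun t : ℝ => f w + ‖w - z‖ ^ 2 / 2 + (1 - t) * ‖v - w‖ ^ 2 / 2)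
      (𝓝[>] (0:ℝ)) (𝓝 (f w + ‖w - z‖ ^ 2 / 2 + ‖v - w‖ ^ 2 / 2)) := by
    have hcont : Continuous (fun t : ℝ => f w + ‖w - z‖ ^ 2 / 2 + (1 - t) * ‖v - w‖ ^ 2 / 2) := by
      continuity
    have := hcont.tendsto 0
    simp only [sub_zero, one_mul] at this
    exact this.mono_left nhdsWithin_le_nhds
  refine le_of_tendsto htend ?_
  filter_upwards [Ioc_mem_nhdsGT zero_lt_one] with t ht using key t ht

end Aux

set_option maxHeartbeats 1000000 in
/-- One accelerated stochastic gradient step in expectation: if the noise `δ` has mean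
zero and square-integrable norm, then
`∫ [βγ(Φ(x⁺(ω))−Φ(u)) + ½‖u−z⁺(ω)‖²] dμ ≤ (β−1)γ(Φ(x)−Φ(u)) + ½‖u−z‖²
   + (βγ²/(2(β−Lγ)))·∫‖δ‖² dμ`. -/
theorem asg_one_step_expectation {n : ℕ} {Ω : Type*} [MeasurableSpace Ω]
    (μ : Measure Ω) [IsProbabilityMeasure μ]
    (X : Set (EuclideanSpace ℝ (Fin n))) (hXne : X.Nonempty)
    (hXcompact : IsCompact X) (hXconv : Convex ℝ X)
    (ψ φ : EuclideanSpace ℝ (Fin n) → ℝ)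
    (hψ : ConvexOn ℝ Set.univ ψ) (hφ : ConvexOn ℝ Set.univ φ)
    (φ' : EuclideanSpace ℝ (Fin n) → EuclideanSpace ℝ (Fin n))
    (hφgrad : ∀ x, HasGradientAt φ (φ' x) x)
    (L : ℝ) (hL : 0 < L)
    (hLip : ∀ x ∈ X, ∀ y ∈ X, ‖φ' x - φ' y‖ ≤ L * ‖x - y‖)
    (β γ : ℝ) (hβ : 1 ≤ β) (hγ : 0 < γ) (hLγ : L * γ < β)
    (x z u : EuclideanSpace ℝ (Fin n)) (hx : x ∈ X) (hz : z ∈ X) (hu : u ∈ X)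
    (y : EuclideanSpace ℝ (Fin n)) (hy : y = (1 - β⁻¹) • x + β⁻¹ • z)
    (δ : Ω → EuclideanSpace ℝ (Fin n)) (hδmeas : Measurable δ)
    (hδmean : ∫ ω, δ ω ∂μ = 0)
    (hδsq : Integrable (fun ω => ‖δ ω‖ ^ 2) μ)
    (zp : Ω → EuclideanSpace ℝ (Fin n)) (hzpmeas : Measurable zp)
    (hzpX : ∀ ω, zp ω ∈ X)
    (hprox : ∀ ω, ∀ v ∈ X,
      γ * (⟪φ' y + δ ω, zp ω⟫ + ψ (zp ω)) + ‖zp ω - z‖ ^ 2 / 2 ≤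
        γ * (⟪φ' y + δ ω, v⟫ + ψ v) + ‖v - z‖ ^ 2 / 2)
    (xp : Ω → EuclideanSpace ℝ (Fin n))
    (hxp : ∀ ω, xp ω = (1 - β⁻¹) • x + β⁻¹ • zp ω) :
    ∫ ω, (β * γ * ((φ (xp ω) + ψ (xp ω)) - (φ u + ψ u)) + ‖u - zp ω‖ ^ 2 / 2) ∂μ ≤
      (β - 1) * γ * ((φ x + ψ x) - (φ u + ψ u)) + ‖u - z‖ ^ 2 / 2 +
      β * γ ^ 2 / (2 * (β - L * γ)) * ∫ ω, ‖δ ω‖ ^ 2 ∂μ := by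
  have hβpos : (0:ℝ) < β := by linarith
  have hβ0 : β ≠ 0 := ne_of_gt hβpos
  have hβinv_nonneg : (0:ℝ) ≤ β⁻¹ := by positivity
  have hβinv_le : β⁻¹ ≤ 1 := by
    rw [inv_le_one_iff₀]; right; linarith
  have hcoef : (0:ℝ) ≤ 1 - β⁻¹ := by linarith
  have hsum : (1 - β⁻¹) + β⁻¹ = 1 := by ring
  have hcpos : (0:ℝ) < β - L * γ := by linarith
  set K : ℝ := β * γ ^ 2 / (2 * (β - L * γ)) with hK
  set C : ℝ := (β - 1) * γ * ((φ x + ψ x) - (φ u + ψ u)) + ‖u - z‖ ^ 2 / 2 with hC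
  have hyX : y ∈ X := by rw [hy]; exact hXconv hx hz hcoef hβinv_nonneg hsum
  have hxpX : ∀ ω, xp ω ∈ X := fun ω => by
    rw [hxp ω]; exact hXconv hx (hzpX ω) hcoef hβinv_nonneg hsum
  -- pointwise inequality
  have hpt : ∀ ω, β * γ * ((φ (xp ω) + ψ (xp ω)) - (φ u + ψ u)) + ‖u - zp ω‖ ^ 2 / 2 ≤
      C + K * ‖δ ω‖ ^ 2 + γ * (⟪u, δ ω⟫ - ⟪z, δ ω⟫) := by
    intro ω
    set w := zp ω with hwdef
    have hwX := hzpX ω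
    -- descent lemma
    have hdesc := descent_lemma hXconv hφgrad hLip hyX (hxpX ω)
    have hdiff : xp ω - y = β⁻¹ • (w - z) := by rw [hxp ω, hy]; module
    rw [hdiff, real_inner_smul_right, norm_smul, Real.norm_eq_abs,
      abs_of_nonneg hβinv_nonneg, mul_pow] at hdesc
    -- scaled descent
    have S1 : β * γ * φ (xp ω) ≤ β * γ * φ y + γ * ⟪φ' y, w - z⟫
        + L * γ / (2 * β) * ‖w - z‖ ^ 2 := by
      have h := mul_le_mul_of_nonneg_left hdesc (by positivity : (0:ℝ) ≤ β * γ)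
      have heq : β * γ * (φ y + β⁻¹ * ⟪φ' y, w - z⟫ + L / 2 * (β⁻¹ ^ 2 * ‖w - z‖ ^ 2))
          = β * γ * φ y + γ * ⟪φ' y, w - z⟫ + L * γ / (2 * β) * ‖w - z‖ ^ 2 := by
        have hb : β * β⁻¹ = 1 := mul_inv_cancel₀ hβ0
        field_simp
      exact h.trans heq.le
    -- scaled ψ-convexity
    have S2 : β * γ * ψ (xp ω) ≤ (β - 1) * γ * ψ x + γ * ψ w := by
      have hconv := hψ.2 (Set.mem_univ x) (Set.mem_univ w) hcoef hβinv_nonneg hsum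
      have h1 : ψ (xp ω) ≤ (1 - β⁻¹) * ψ x + β⁻¹ * ψ w := by
        rw [hxp ω]; simpa using hconv
      have h := mul_le_mul_of_nonneg_left h1 (by positivity : (0:ℝ) ≤ β * γ)
      have heq : β * γ * ((1 - β⁻¹) * ψ x + β⁻¹ * ψ w)
          = (β - 1) * γ * ψ x + γ * ψ w := by
        field_simp
      exact h.trans heq.le
    -- three-point inequality
    have h3 : γ * (⟪φ' y + δ ω, w⟫ + ψ w) + ‖w - z‖ ^ 2 / 2 + ‖u - w‖ ^ 2 / 2 ≤
        γ * (⟪φ' y + δ ω, u⟫ + ψ u) + ‖u - z‖ ^ 2 / 2 := by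
      refine prox_three_point (f := fun q => γ * (⟪φ' y + δ ω, q⟫ + ψ q)) hXconv hwX hu ?_
        (fun q hq => hprox ω q hq)
      intro t ht
      have hψc := hψ.2 (Set.mem_univ w) (Set.mem_univ u) (by linarith [ht.2] : (0:ℝ) ≤ 1 - t)
        ht.1 (by ring)
      simp only [smul_eq_mul] at hψc
      have hlin : ⟪φ' y + δ ω, (1-t) • w + t • u⟫ + ψ ((1-t) • w + t • u)
          ≤ (1-t) * (⟪φ' y + δ ω, w⟫ + ψ w) + t * (⟪φ' y + δ ω, u⟫ + ψ u) := by
        rw [inner_add_right, real_inner_smul_right, real_inner_smul_right]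
        linarith [hψc]
      calc γ * (⟪φ' y + δ ω, (1-t) • w + t • u⟫ + ψ ((1-t) • w + t • u))
          ≤ γ * ((1-t) * (⟪φ' y + δ ω, w⟫ + ψ w) + t * (⟪φ' y + δ ω, u⟫ + ψ u)) :=
            mul_le_mul_of_nonneg_left hlin hγ.le
        _ = (1-t) * (γ * (⟪φ' y + δ ω, w⟫ + ψ w)) + t * (γ * (⟪φ' y + δ ω, u⟫ + ψ u)) := by
            ring
    rw [inner_add_left, inner_add_left] at h3
    -- gradient convexity, scaled
    have hu4 := grad_convex_le hφ (hφgrad y) u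
    have hx5 := grad_convex_le hφ (hφgrad y) x
    have S4 : γ * (φ y + ⟪φ' y, u - y⟫) ≤ γ * φ u := mul_le_mul_of_nonneg_left hu4 hγ.le
    have S5 : (β - 1) * γ * (φ y + ⟪φ' y, x - y⟫) ≤ (β - 1) * γ * φ x :=
      mul_le_mul_of_nonneg_left hx5 (mul_nonneg (by linarith) hγ.le)
    -- vector identity
    have hz' : z = β • y - (β - 1) • x := by
      rw [hy]; match_scalars <;> field_simp <;> ring
    have hvec : u - z = (u - y) + (β - 1) • (x - y) := by rw [hz']; module
    have eq1 : ⟪φ' y, u⟫ - ⟪φ' y, z⟫ = ⟪φ' y, u - y⟫ + (β - 1) * ⟪φ' y, x - y⟫ := by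
      rw [← inner_sub_right, hvec, inner_add_right, real_inner_smul_right]
    have eq1γ : γ * (⟪φ' y, u⟫ - ⟪φ' y, z⟫)
        = γ * ⟪φ' y, u - y⟫ + (β - 1) * γ * ⟪φ' y, x - y⟫ := by rw [eq1]; ring
    have eqAγ : γ * ⟪φ' y, w - z⟫ = γ * ⟪φ' y, w⟫ - γ * ⟪φ' y, z⟫ := by
      rw [inner_sub_right]; ring
    -- Young's inequality
    have hY : γ * (⟪δ ω, z⟫ - ⟪δ ω, w⟫) ≤ K * ‖δ ω‖ ^ 2
        + (β - L * γ) / (2 * β) * ‖w - z‖ ^ 2 := by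
      have hle : ⟪δ ω, z⟫ - ⟪δ ω, w⟫ ≤ ‖δ ω‖ * ‖w - z‖ := by
        rw [← inner_sub_right]
        calc ⟪δ ω, z - w⟫ ≤ ‖δ ω‖ * ‖z - w‖ := real_inner_le_norm _ _
          _ = ‖δ ω‖ * ‖w - z‖ := by rw [norm_sub_rev]
      have key : γ * (‖δ ω‖ * ‖w - z‖) ≤ K * ‖δ ω‖ ^ 2
          + (β - L * γ) / (2 * β) * ‖w - z‖ ^ 2 := by
        rw [hK, div_mul_eq_mul_div, div_mul_eq_mul_div,
          div_add_div _ _ (by positivity) (by positivity), le_div_iff₀ (by positivity)]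
        nlinarith [sq_nonneg (β * γ * ‖δ ω‖ - (β - L * γ) * ‖w - z‖), hβpos, hcpos,
          norm_nonneg (δ ω), norm_nonneg (w - z), hγ]
      have := mul_le_mul_of_nonneg_left hle hγ.le
      linarith [key, this]
    -- swap inner arguments in goal
    have eqsw1 : ⟪u, δ ω⟫ = ⟪δ ω, u⟫ := real_inner_comm _ _
    have eqsw2 : ⟪z, δ ω⟫ = ⟪δ ω, z⟫ := real_inner_comm _ _
    have eqB : L * γ / (2 * β) * ‖w - z‖ ^ 2 + (β - L * γ) / (2 * β) * ‖w - z‖ ^ 2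
        = ‖w - z‖ ^ 2 / 2 := by
      field_simp
      ring
    rw [hC, eqsw1, eqsw2]
    linarith [S1, S2, h3, S4, S5, hY, eq1γ, eqAγ, eqB]
  -- integrability
  have hδint : Integrable δ μ := by
    refine ((integrable_const (1:ℝ)).add hδsq).mono' hδmeas.aestronglyMeasurable
      (ae_of_all _ fun ω => ?_)
    simp only [Pi.add_apply]
    nlinarith [sq_nonneg (‖δ ω‖ - 1), norm_nonneg (δ ω)]
  have hRHSint : Integrable (fun ω => C + K * ‖δ ω‖ ^ 2 + γ * (⟪u, δ ω⟫ - ⟪z, δ ω⟫)) μ :=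
    ((integrable_const C).add (hδsq.const_mul K)).add
      (((hδint.const_inner u).sub (hδint.const_inner z)).const_mul γ)
  -- continuity of the integrand
  have hφdiff : Differentiable ℝ φ := fun q => (hφgrad q).differentiableAt
  have hφcont : Continuous φ := hφdiff.continuous
  have hψcont : Continuous ψ := by
    exact continuousOn_univ.mp (hψ.continuousOn isOpen_univ)
  set G : EuclideanSpace ℝ (Fin n) → ℝ := fun q =>
    β * γ * ((φ ((1 - β⁻¹) • x + β⁻¹ • q) + ψ ((1 - β⁻¹) • x + β⁻¹ • q)) - (φ u + ψ u))
      + ‖u - q‖ ^ 2 / 2 with hGdef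
  have hT : Continuous (fun q : EuclideanSpace ℝ (Fin n) => (1 - β⁻¹) • x + β⁻¹ • q) :=
    continuous_const.add (continuous_id.const_smul β⁻¹)
  have hGcont : Continuous G := by
    apply Continuous.add
    · exact continuous_const.mul (((hφcont.comp hT).add (hψcont.comp hT)).sub continuous_const)
    · exact ((continuous_const.sub continuous_id).norm.pow 2).div_const 2
  have hcomp : ∀ ω, β * γ * ((φ (xp ω) + ψ (xp ω)) - (φ u + ψ u)) + ‖u - zp ω‖ ^ 2 / 2
      = G (zp ω) := fun ω => by simp only [hGdef, hxp ω]
  have hLHSint : Integrable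
      (fun ω => β * γ * ((φ (xp ω) + ψ (xp ω)) - (φ u + ψ u)) + ‖u - zp ω‖ ^ 2 / 2) μ := by
    have hfeq : (fun ω => β * γ * ((φ (xp ω) + ψ (xp ω)) - (φ u + ψ u)) + ‖u - zp ω‖ ^ 2 / 2)
        = fun ω => G (zp ω) := funext hcomp
    rw [hfeq]
    obtain ⟨M, hM⟩ := hXcompact.exists_bound_of_continuousOn hGcont.continuousOn
    exact (integrable_const M).mono'
      ((hGcont.measurable.comp hzpmeas).aestronglyMeasurable)
      (ae_of_all _ fun ω => hM _ (hzpX ω))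
  -- integrate
  have hmono := integral_mono hLHSint hRHSint hpt
  have hIval : ∫ ω, (C + K * ‖δ ω‖ ^ 2 + γ * (⟪u, δ ω⟫ - ⟪z, δ ω⟫)) ∂μ
      = C + K * ∫ ω, ‖δ ω‖ ^ 2 ∂μ := by
    have hic : Integrable (fun _ : Ω => C) μ := integrable_const C
    have hik : Integrable (fun ω => K * ‖δ ω‖ ^ 2) μ := hδsq.const_mul K
    have hi1 : Integrable (fun ω => C + K * ‖δ ω‖ ^ 2) μ := hic.add hik
    have hiu : Integrable (fun ω => ⟪u, δ ω⟫) μ := hδint.const_inner u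
    have hiz : Integrable (fun ω => ⟪z, δ ω⟫) μ := hδint.const_inner z
    have hi2 : Integrable (fun ω => γ * (⟪u, δ ω⟫ - ⟪z, δ ω⟫)) μ := (hiu.sub hiz).const_mul γ
    rw [integral_add hi1 hi2, integral_add hic hik,
      integral_const, integral_const_mul, integral_const_mul,
      integral_sub hiu hiz,
      integral_inner hδint, integral_inner hδint, hδmean, inner_zero_right]
    simp [measure_univ]
  rw [hIval] at hmono
  calc ∫ ω, (β * γ * ((φ (xp ω) + ψ (xp ω)) - (φ u + ψ u)) + ‖u - zp ω‖ ^ 2 / 2) ∂μ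
      ≤ C + K * ∫ ω, ‖δ ω‖ ^ 2 ∂μ := hmono
    _ = (β - 1) * γ * ((φ x + ψ x) - (φ u + ψ u)) + ‖u - z‖ ^ 2 / 2 +
        β * γ ^ 2 / (2 * (β - L * γ)) * ∫ ω, ‖δ ω‖ ^ 2 ∂μ := by rw [hC, hK]
end

section
/- Let K ≥ 2 be an integer, set ρ := K^{3/2}, and for 1 ≤ k < K set β_k := (k+1)/2 and γ_k := (k+1)/(4(L_f + ρL_c)). Suppose x̄ ∈ X is feasible and minimizes Φ := f + ψ over the feasible set, with Φ* := Φ(x̄), and suppose x*_ρ ∈ X minimizes Φ_ρ := Φ + ρP over X. Let (Ω, μ) be a probability space and let measurable maps x_k, z_k, δ_k : Ω → ℝⁿ satisfy pointwise, for 1 ≤ k < K: x_k(ω), z_k(ω) ∈ X with x₁ = z₁ constant; y_k(ω) = (1 − 1/β_k)x_k(ω) + (1/β_k)z_k(ω); z_{k+1}(ω) minimizes u ↦ γ_k(⟨∇f(y_k(ω)) + ρ∇P(y_k(ω)) + δ_k(ω), u⟩ + ψ(u)) + ½‖u − z_k(ω)‖² over X; and x_{k+1}(ω) = (1 − 1/β_k)x_k(ω)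 + (1/β_k)z_{k+1}(ω). Suppose ∫ ‖δ_k‖² dμ ≤ σ² and ∫ ⟨δ_k(ω), x*_ρ − z_k(ω)⟩ dμ(ω) = 0 for all 1 ≤ k < K. Then ∫ (Φ(x_K(ω)) − Φ*) dμ(ω) ≤ (6L_cD² + 3σ²/L_c)·K^{−1/2} + 6L_fD²·K^{−2}. -/
open MeasureTheory RealInnerProductSpace Set

variable {n : ℕ}
local notation "E" => EuclideanSpace ℝ (Fin n)

-- norm convex-combination identity
lemma norm_combo (a b : E) (t : ℝ) :
    ‖(1-t)•a + t•b‖^2 = (1-t)*‖a‖^2 + t*‖b‖^2 - t*(1-t)*‖a-b‖^2 := by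
  simp only [← real_inner_self_eq_norm_sq, inner_add_left, inner_add_right,
    inner_sub_left, inner_sub_right, real_inner_smul_left, real_inner_smul_right]
  rw [real_inner_comm b a]
  ring

-- gradient add / smul
lemma gradient_add_smul {f P : E → ℝ} {a b : E} {x : E} (ρ : ℝ)
    (hf : HasGradientAt f a x) (hP : HasGradientAt P b x) :
    HasGradientAt (fun u => f u + ρ * P u) (a + ρ • b) x := by
  rw [hasGradientAt_iff_hasFDerivAt] at *
  have := hf.add (hP.const_mul ρ)
  rw [map_add, map_smul]
  exact this

lemma hasDerivAt_line {f : E → ℝ} {g : E} {p v : E} {t : ℝ}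
    (h : HasGradientAt f g (p + t • v)) :
    HasDerivAt (fun s : ℝ => f (p + s • v)) ⟪g, v⟫ t := by
  have hline : HasDerivAt (fun s : ℝ => p + s • v) v t := by
    simpa using ((hasDerivAt_id t).smul_const v).const_add p
  have := (h.hasFDerivAt).comp_hasDerivAt t hline
  simpa [InnerProductSpace.toDual_apply_apply, Function.comp_def] using this

lemma grad_convex_ineq {f : E → ℝ} (hf : ConvexOn ℝ Set.univ f) {g : E} {p : E}
    (h : HasGradientAt f g p) (u : E) : f p + ⟪g, u - p⟫ ≤ f u := by
  set φ : ℝ → ℝ := fun s => f (p + s • (u - p)) with hφ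
  have hd : HasDerivAt φ ⟪g, u - p⟫ 0 := hasDerivAt_line (by simpa using h)
  have htend : Filter.Tendsto (slope φ 0) (nhdsWithin 0 (Set.Ioi 0)) (nhds ⟪g, u - p⟫) :=
    (hasDerivAt_iff_tendsto_slope.mp hd).mono_left
      (nhdsWithin_mono 0 (fun t ht => ne_of_gt ht))
  have hev : ∀ᶠ t in nhdsWithin 0 (Set.Ioi 0), slope φ 0 t ≤ f u - f p := by
    filter_upwards [Ioc_mem_nhdsGT_of_mem (by constructor <;> norm_num :
      (0:ℝ) ∈ Set.Ico (0:ℝ) 1)] with t ht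
    have hcomb : p + t • (u - p) = (1 - t) • p + t • u := by module
    have hconv : φ t ≤ (1 - t) * f p + t * f u := by
      rw [hφ]; simp only [hcomb]
      exact hf.2 (Set.mem_univ p) (Set.mem_univ u) (by linarith [ht.2]) (le_of_lt ht.1) (by ring)
    have : slope φ 0 t = (φ t - φ 0) / t := by
      rw [slope_def_field]; ring_nf
    rw [this]
    rw [div_le_iff₀ ht.1]
    have : φ 0 = f p := by simp [hφ]
    rw [this]; nlinarith [ht.1]
  have := le_of_tendsto htend hev
  linarith

lemma descent_lemma_s9 {X : Set E} (hX : Convex ℝ X) {F : E → ℝ} {G : E → E}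
    (hgrad : ∀ u, HasGradientAt F (G u) u) {L : ℝ} (hL : 0 ≤ L)
    (hLip : ∀ a ∈ X, ∀ b ∈ X, ‖G a - G b‖ ≤ L * ‖a - b‖)
    {p q : E} (hp : p ∈ X) (hq : q ∈ X) :
    F q ≤ F p + ⟪G p, q - p⟫ + L / 2 * ‖q - p‖ ^ 2 := by
  set v := q - p with hv
  set φd : ℝ → ℝ := fun t => ⟪G (p + t • v), v⟫ with hφd
  have hmem : ∀ t ∈ Set.Icc (0:ℝ) 1, p + t • v ∈ X := by
    intro t ht
    have : p + t • v = (1 - t) • p + t • q := by rw [hv]; module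
    rw [this]
    exact hX hp hq (by linarith [ht.2]) ht.1 (by ring)
  have hder : ∀ t ∈ Set.uIcc (0:ℝ) 1, HasDerivAt (fun s : ℝ => F (p + s • v)) (φd t) t :=
    fun t _ => hasDerivAt_line (hgrad _)
  have hcont : ContinuousOn φd (Set.Icc (0:ℝ) 1) := by
    have hlip : LipschitzOnWith (Real.toNNReal (L * ‖v‖ ^ 2)) φd (Set.Icc (0:ℝ) 1) := by
      apply LipschitzOnWith.of_dist_le_mul
      intro s hs t ht
      rw [Real.dist_eq, Real.dist_eq]
      have h1 : φd s - φd t = ⟪G (p + s • v) - G (p + t • v), v⟫ := by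
        rw [hφd]; simp [inner_sub_left]
      have h2 : |φd s - φd t| ≤ ‖G (p + s • v) - G (p + t • v)‖ * ‖v‖ := by
        rw [h1]; exact abs_real_inner_le_norm _ _
      have h3 : ‖G (p + s • v) - G (p + t • v)‖ ≤ L * ‖(p + s • v) - (p + t • v)‖ :=
        hLip _ (hmem s hs) _ (hmem t ht)
      have h4 : (p + s • v) - (p + t • v) = (s - t) • v := by module
      rw [h4, norm_smul] at h3
      have hc : (Real.toNNReal (L * ‖v‖ ^ 2) : ℝ) = L * ‖v‖ ^ 2 := by
        rw [Real.coe_toNNReal]; positivity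
      rw [hc]
      calc |φd s - φd t| ≤ ‖G (p + s • v) - G (p + t • v)‖ * ‖v‖ := h2
        _ ≤ (L * (‖s - t‖ * ‖v‖)) * ‖v‖ := by
            apply mul_le_mul_of_nonneg_right h3 (norm_nonneg _)
        _ = L * ‖v‖ ^ 2 * |s - t| := by rw [Real.norm_eq_abs]; ring
    exact hlip.continuousOn
  have hcont' : ContinuousOn φd (Set.uIcc (0:ℝ) 1) := by
    rwa [Set.uIcc_of_le (by norm_num : (0:ℝ) ≤ 1)]
  have hFTC : ∫ t in (0:ℝ)..1, φd t = F (p + (1:ℝ) • v) - F (p + (0:ℝ) • v) :=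
    intervalIntegral.integral_eq_sub_of_hasDerivAt hder (hcont'.intervalIntegrable)
  have hq1 : p + (1:ℝ) • v = q := by rw [hv]; module
  have hp0 : p + (0:ℝ) • v = p := by module
  rw [hq1, hp0] at hFTC
  have hc2 : IntervalIntegrable (fun t : ℝ => L * t * ‖v‖ ^ 2) MeasureTheory.volume 0 1 := by
    apply Continuous.intervalIntegrable; fun_prop
  have hbound : ∫ t in (0:ℝ)..1, φd t ≤ ∫ t in (0:ℝ)..1, (⟪G p, v⟫ + L * t * ‖v‖ ^ 2) := by
    apply intervalIntegral.integral_mono_on (by norm_num)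
      (hcont'.intervalIntegrable)
    · exact intervalIntegrable_const.add hc2
    · intro t ht
      have h1 : φd t - ⟪G p, v⟫ = ⟪G (p + t • v) - G p, v⟫ := by
        rw [hφd]; simp [inner_sub_left]
      have h2 : ⟪G (p + t • v) - G p, v⟫ ≤ ‖G (p + t • v) - G p‖ * ‖v‖ :=
        real_inner_le_norm _ _
      have h3 : ‖G (p + t • v) - G p‖ ≤ L * ‖(p + t • v) - p‖ :=
        hLip _ (hmem t ht) _ hp
      have h4 : (p + t • v) - p = t • v := by module
      rw [h4, norm_smul, Real.norm_eq_abs, abs_of_nonneg ht.1] at h3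
      nlinarith [norm_nonneg v, mul_le_mul_of_nonneg_right h3 (norm_nonneg v)]
  have hval : ∫ t in (0:ℝ)..1, (⟪G p, v⟫ + L * t * ‖v‖ ^ 2) = ⟪G p, v⟫ + L / 2 * ‖v‖ ^ 2 := by
    rw [intervalIntegral.integral_add intervalIntegrable_const hc2,
      intervalIntegral.integral_const]
    have h2 : (fun t : ℝ => L * t * ‖v‖ ^ 2) = fun t : ℝ => (L * ‖v‖ ^ 2) * t := by
      ext t; ring
    rw [h2, intervalIntegral.integral_const_mul, integral_id]
    simp; ring
  rw [hFTC] at hbound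
  rw [hval] at hbound
  linarith

lemma three_point {X : Set E} (hX : Convex ℝ X) {ψ : E → ℝ}
    (hψ : ConvexOn ℝ Set.univ ψ) {γ : ℝ} (hγ : 0 < γ) {v zk zp : E} (hzp : zp ∈ X)
    (hmin : ∀ u ∈ X, γ * (⟪v, zp⟫ + ψ zp) + ‖zp - zk‖ ^ 2 / 2 ≤
      γ * (⟪v, u⟫ + ψ u) + ‖u - zk‖ ^ 2 / 2)
    {u : E} (hu : u ∈ X) :
    γ * (⟪v, zp⟫ + ψ zp) + ‖zp - zk‖ ^ 2 / 2 + ‖u - zp‖ ^ 2 / 2 ≤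
      γ * (⟪v, u⟫ + ψ u) + ‖u - zk‖ ^ 2 / 2 := by
  set a : ℝ := γ * (⟪v, zp⟫ + ψ zp) + ‖zp - zk‖ ^ 2 / 2 with ha
  set b : ℝ := γ * (⟪v, u⟫ + ψ u) + ‖u - zk‖ ^ 2 / 2 with hb
  set r : ℝ := ‖u - zp‖ ^ 2 with hr
  have hr0 : 0 ≤ r := by positivity
  have key : ∀ t : ℝ, 0 < t → t ≤ 1 → a + r / 2 ≤ b + t * r / 2 := by
    intro t ht0 ht1
    set w : E := (1 - t) • zp + t • u with hw
    have hwX : w ∈ X := hX hzp hu (by linarith) ht0.le (by ring)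
    have hinner : ⟪v, w⟫ = (1 - t) * ⟪v, zp⟫ + t * ⟪v, u⟫ := by
      rw [hw, inner_add_right, real_inner_smul_right, real_inner_smul_right]
    have hψw : ψ w ≤ (1 - t) * ψ zp + t * ψ u :=
      hψ.2 (Set.mem_univ zp) (Set.mem_univ u) (by linarith) ht0.le (by ring)
    have hnorm : ‖w - zk‖ ^ 2 = (1 - t) * ‖zp - zk‖ ^ 2 + t * ‖u - zk‖ ^ 2
        - t * (1 - t) * r := by
      have h1 : w - zk = (1 - t) • (zp - zk) + t • (u - zk) := by rw [hw]; module
      have h2 : (zp - zk) - (u - zk) = zp - u := by module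
      rw [h1, norm_combo, h2, hr, norm_sub_rev zp u]
    have hm := hmin w hwX
    rw [hinner, hnorm] at hm
    have hγψ : γ * ψ w ≤ γ * ((1 - t) * ψ zp + t * ψ u) :=
      mul_le_mul_of_nonneg_left hψw hγ.le
    have hta : t * a ≤ t * (b - (1 - t) * r / 2) := by
      rw [ha, hb]; nlinarith [hm, hγψ]
    have := le_of_mul_le_mul_left hta ht0
    nlinarith
  refine le_of_forall_pos_le_add ?_
  intro ε hε
  have ht0 : 0 < min 1 (2 * ε / (r + 1)) := by positivity
  have ht1 : min 1 (2 * ε / (r + 1)) ≤ 1 := min_le_left _ _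
  have := key _ ht0 ht1
  have htr : min 1 (2 * ε / (r + 1)) * r / 2 ≤ ε := by
    have h1 : min 1 (2 * ε / (r + 1)) ≤ 2 * ε / (r + 1) := min_le_right _ _
    have h2 : 0 < r + 1 := by linarith
    rw [le_div_iff₀ h2] at h1
    nlinarith
  linarith

lemma convexOn_maxsq {c : E → ℝ} (hc : ConvexOn ℝ Set.univ c) :
    ConvexOn ℝ Set.univ (fun u => max (c u) 0 ^ 2) := by
  refine ⟨convex_univ, ?_⟩
  intro x _ y _ a b ha hb hab
  simp only
  set p := max (c x) 0 with hp
  set q := max (c y) 0 with hq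
  have hp0 : 0 ≤ p := le_max_right _ _
  have hq0 : 0 ≤ q := le_max_right _ _
  have hcp : c x ≤ p := le_max_left _ _
  have hcq : c y ≤ q := le_max_left _ _
  have h1 : c (a • x + b • y) ≤ a * c x + b * c y :=
    hc.2 (Set.mem_univ x) (Set.mem_univ y) ha hb hab
  have h2 : max (c (a • x + b • y)) 0 ≤ a * p + b * q := by
    apply max_le
    · nlinarith
    · positivity
  have h3 : max (c (a • x + b • y)) 0 ^ 2 ≤ (a * p + b * q) ^ 2 :=
    pow_le_pow_left₀ (le_max_right _ _) h2 2
  simp only [smul_eq_mul]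
  nlinarith [sq_nonneg (p - q), mul_nonneg ha hb]

lemma sum_sq_le_cube : ∀ K : ℕ, ∑ i ∈ Finset.Ico 1 K, ((i : ℝ) + 1) ^ 2 ≤ (K : ℝ) ^ 3 := by
  intro K
  induction K with
  | zero => simp
  | succ K ih =>
    rcases Nat.eq_zero_or_pos K with h | h
    · subst h; simp
    · rw [Finset.sum_Ico_succ_top (by omega : 1 ≤ K)]
      push_cast
      have hK : (1 : ℝ) ≤ K := by exact_mod_cast h
      nlinarith [ih]



open MeasureTheory RealInnerProductSpace


lemma convexOn_sum' {ι : Type*} (t : Finset ι) (F : ι → E → ℝ)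
    (h : ∀ i ∈ t, ConvexOn ℝ Set.univ (F i)) :
    ConvexOn ℝ Set.univ (fun u => ∑ i ∈ t, F i u) := by
  classical
  induction t using Finset.induction with
  | empty => simpa using convexOn_const (0:ℝ) convex_univ
  | @insert a s ha ih =>
    have := (h a (Finset.mem_insert_self a s)).add (ih fun i hi => h i (Finset.mem_insert_of_mem hi))
    simp only [Finset.sum_insert ha]
    exact this

set_option maxHeartbeats 2000000 in
/-- Theorem 2.1 (constant penalty parameters), expected optimality gap: running the
single-loop penalty ASG scheme with `ρ = K^{3/2}`, `β_k = (k+1)/2`,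
`γ_k = (k+1)/(4(L_f + ρL_c))` and mean-zero noise with variance at most `σ²` yields
`𝔼[Φ(x_K) − Φ*] ≤ (6L_cD² + 3σ²/L_c)·K^{−1/2} + 6L_fD²·K^{−2}`. -/
theorem penalty_asg_constant_expected_gap {n m : ℕ} {Ω : Type*} [MeasurableSpace Ω]
    (μ : Measure Ω) [IsProbabilityMeasure μ]
    (X : Set (EuclideanSpace ℝ (Fin n))) (hXne : X.Nonempty)
    (hXcompact : IsCompact X) (hXconv : Convex ℝ X)
    (D : ℝ) (hD : 0 < D) (hdiam : ∀ x ∈ X, ∀ y ∈ X, ‖x - y‖ ≤ D)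
    (ψ f : EuclideanSpace ℝ (Fin n) → ℝ)
    (hψ : ConvexOn ℝ Set.univ ψ) (hf : ConvexOn ℝ Set.univ f)
    (f' : EuclideanSpace ℝ (Fin n) → EuclideanSpace ℝ (Fin n))
    (hfgrad : ∀ x, HasGradientAt f (f' x) x)
    (Lf : ℝ) (hLf : 0 < Lf)
    (hfLip : ∀ x ∈ X, ∀ y ∈ X, ‖f' x - f' y‖ ≤ Lf * ‖x - y‖)
    (c : Fin m → EuclideanSpace ℝ (Fin n) → ℝ)
    (hcconv : ∀ i, ConvexOn ℝ Set.univ (c i))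
    (c' : Fin m → EuclideanSpace ℝ (Fin n) → EuclideanSpace ℝ (Fin n))
    (hcgrad : ∀ i x, HasGradientAt (c i) (c' i x) x)
    (P' : EuclideanSpace ℝ (Fin n) → EuclideanSpace ℝ (Fin n))
    (hPgrad : ∀ x, HasGradientAt
      (fun u => (1 : ℝ) / 2 * ∑ i, max (c i u) 0 ^ 2) (P' x) x)
    (Lc : ℝ) (hLc : 0 < Lc)
    (hPLip : ∀ x ∈ X, ∀ y ∈ X, ‖P' x - P' y‖ ≤ Lc * ‖x - y‖)
    (σ : ℝ) (hσ : 0 < σ)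
    (K : ℕ) (hK : 2 ≤ K)
    (ρ : ℝ) (hρ : ρ = (K : ℝ) ^ ((3 : ℝ) / 2))
    (β γ : ℕ → ℝ)
    (hβ : ∀ k, 1 ≤ k → k < K → β k = ((k : ℝ) + 1) / 2)
    (hγ : ∀ k, 1 ≤ k → k < K → γ k = ((k : ℝ) + 1) / (4 * (Lf + ρ * Lc)))
    (xbar : EuclideanSpace ℝ (Fin n)) (hxbarX : xbar ∈ X)
    (hxbarfeas : ∀ i, c i xbar ≤ 0)
    (hxbaropt : ∀ u ∈ X, (∀ i, c i u ≤ 0) → f xbar + ψ xbar ≤ f u + ψ u)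
    (xρ : EuclideanSpace ℝ (Fin n)) (hxρX : xρ ∈ X)
    (hxρopt : ∀ u ∈ X,
      f xρ + ψ xρ + ρ * ((1 : ℝ) / 2 * ∑ i, max (c i xρ) 0 ^ 2) ≤
        f u + ψ u + ρ * ((1 : ℝ) / 2 * ∑ i, max (c i u) 0 ^ 2))
    (x z y δ : ℕ → Ω → EuclideanSpace ℝ (Fin n))
    (hxmeas : ∀ k, Measurable (x k)) (hzmeas : ∀ k, Measurable (z k))
    (hδmeas : ∀ k, Measurable (δ k))
    (x0 : EuclideanSpace ℝ (Fin n)) (hx0X : x0 ∈ X)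
    (hinit : ∀ ω, x 1 ω = x0 ∧ z 1 ω = x0)
    (hxX : ∀ k, 1 ≤ k → k ≤ K → ∀ ω, x k ω ∈ X)
    (hzX : ∀ k, 1 ≤ k → k ≤ K → ∀ ω, z k ω ∈ X)
    (hy : ∀ k, 1 ≤ k → k < K → ∀ ω,
      y k ω = (1 - (β k)⁻¹) • x k ω + (β k)⁻¹ • z k ω)
    (hprox : ∀ k, 1 ≤ k → k < K → ∀ ω, ∀ u ∈ X,
      γ k * (⟪f' (y k ω) + ρ • P' (y k ω) + δ k ω, z (k + 1) ω⟫ + ψ (z (k + 1) ω)) +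
          ‖z (k + 1) ω - z k ω‖ ^ 2 / 2 ≤
        γ k * (⟪f' (y k ω) + ρ • P' (y k ω) + δ k ω, u⟫ + ψ u) +
          ‖u - z k ω‖ ^ 2 / 2)
    (hxrec : ∀ k, 1 ≤ k → k < K → ∀ ω,
      x (k + 1) ω = (1 - (β k)⁻¹) • x k ω + (β k)⁻¹ • z (k + 1) ω)
    (hδint : ∀ k, 1 ≤ k → k < K → Integrable (fun ω => ‖δ k ω‖ ^ 2) μ)
    (hδsq : ∀ k, 1 ≤ k → k < K → ∫ ω, ‖δ k ω‖ ^ 2 ∂μ ≤ σ ^ 2)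
    (hδmean : ∀ k, 1 ≤ k → k < K → ∫ ω, ⟪δ k ω, xρ - z k ω⟫ ∂μ = 0) :
    ∫ ω, ((f (x K ω) + ψ (x K ω)) - (f xbar + ψ xbar)) ∂μ ≤
      (6 * Lc * D ^ 2 + 3 * σ ^ 2 / Lc) * (K : ℝ) ^ (-(1 : ℝ) / 2) +
      6 * Lf * D ^ 2 * (K : ℝ) ^ (-(2 : ℝ)) := by
  classical
  -- setup
  set Pf : EuclideanSpace ℝ (Fin n) → ℝ := fun u => (1 : ℝ) / 2 * ∑ i, max (c i u) 0 ^ 2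
    with hPfdef
  set L : ℝ := Lf + ρ * Lc with hLdef
  have hKpos : (0:ℝ) < (K:ℝ) := by positivity
  have hρ0 : 0 < ρ := by rw [hρ]; positivity
  have hL0 : 0 < L := by rw [hLdef]; positivity
  have hPgrad' : ∀ u, HasGradientAt Pf (P' u) u := hPgrad
  have hxρopt' : ∀ u ∈ X, f xρ + ψ xρ + ρ * Pf xρ ≤ f u + ψ u + ρ * Pf u := hxρopt
  have hPconv : ConvexOn ℝ Set.univ Pf := by
    have hsum : ConvexOn ℝ Set.univ (fun u => ∑ i, max (c i u) 0 ^ 2) := by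
      exact convexOn_sum' Finset.univ _ (fun i _ => convexOn_maxsq (hcconv i))
    have := hsum.smul (by norm_num : (0:ℝ) ≤ 1/2)
    simpa [hPfdef, smul_eq_mul] using this
  have hFconv : ConvexOn ℝ Set.univ (fun u => f u + ρ * Pf u) := by
    have := hPconv.smul hρ0.le
    simp only [smul_eq_mul] at this
    exact hf.add this
  have hGgrad : ∀ u, HasGradientAt (fun w => f w + ρ * Pf w) (f' u + ρ • P' u) u :=
    fun u => gradient_add_smul ρ (hfgrad u) (hPgrad' u)
  have hGLip : ∀ a ∈ X, ∀ b ∈ X,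
      ‖(f' a + ρ • P' a) - (f' b + ρ • P' b)‖ ≤ L * ‖a - b‖ := by
    intro a ha b hb
    have he : (f' a + ρ • P' a) - (f' b + ρ • P' b) = (f' a - f' b) + ρ • (P' a - P' b) := by
      module
    rw [he]
    calc ‖(f' a - f' b) + ρ • (P' a - P' b)‖ ≤ ‖f' a - f' b‖ + ‖ρ • (P' a - P' b)‖ :=
          norm_add_le _ _
      _ = ‖f' a - f' b‖ + ρ * ‖P' a - P' b‖ := by
          rw [norm_smul, Real.norm_eq_abs, abs_of_pos hρ0]
      _ ≤ Lf * ‖a - b‖ + ρ * (Lc * ‖a - b‖) := by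
          have := hPLip a ha b hb
          have := hfLip a ha b hb
          have hm := mul_le_mul_of_nonneg_left (hPLip a ha b hb) hρ0.le
          linarith
      _ = L * ‖a - b‖ := by rw [hLdef]; ring
  -- per-step inequality
  have key : ∀ k, 1 ≤ k → k < K → ∀ ω,
      β k * γ k * ((f (x (k+1) ω) + ψ (x (k+1) ω) + ρ * Pf (x (k+1) ω))
          - (f xρ + ψ xρ + ρ * Pf xρ)) + ‖xρ - z (k+1) ω‖ ^ 2 / 2 ≤
        (β k - 1) * γ k * ((f (x k ω) + ψ (x k ω) + ρ * Pf (x k ω))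
          - (f xρ + ψ xρ + ρ * Pf xρ)) + ‖xρ - z k ω‖ ^ 2 / 2
        + γ k ^ 2 * ‖δ k ω‖ ^ 2 + γ k * ⟪δ k ω, xρ - z k ω⟫ := by
    intro k hk1 hkK ω
    have hbv : β k = ((k : ℝ) + 1) / 2 := hβ k hk1 hkK
    have hgv : γ k = ((k : ℝ) + 1) / (4 * L) := by rw [hγ k hk1 hkK, hLdef]
    have hk1' : (1:ℝ) ≤ (k:ℝ) := by exact_mod_cast hk1
    have hb1 : 1 ≤ β k := by rw [hbv]; linarith
    have hb0 : 0 < β k := by linarith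
    have hg0 : 0 < γ k := by rw [hgv]; positivity
    set κ : ℝ := (β k)⁻¹ with hκdef
    have hκb : κ * β k = 1 := inv_mul_cancel₀ (ne_of_gt hb0)
    have hκ0 : 0 < κ := by rw [hκdef]; positivity
    have hκ1 : κ ≤ 1 := by rw [hκdef]; exact inv_le_one_of_one_le₀ hb1
    have h2Lg : 2 * L * γ k = β k := by
      rw [hgv, hbv]; field_simp; ring
    set xk := x k ω
    set zk := z k ω
    set zp := z (k+1) ω
    set xp := x (k+1) ω
    set yk := y k ω
    set d := δ k ω
    obtain ⟨Gy, hGydef⟩ : ∃ w : EuclideanSpace ℝ (Fin n), w = f' yk + ρ • P' yk := ⟨_, rfl⟩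
    have hxkX : xk ∈ X := hxX k hk1 (le_of_lt hkK) ω
    have hxpX : xp ∈ X := hxX (k+1) (by omega) (by omega) ω
    have hzkX : zk ∈ X := hzX k hk1 (le_of_lt hkK) ω
    have hzpX : zp ∈ X := hzX (k+1) (by omega) (by omega) ω
    have hyeq : yk = (1 - κ) • xk + κ • zk := hy k hk1 hkK ω
    have hxpeq : xp = (1 - κ) • xk + κ • zp := hxrec k hk1 hkK ω
    have hykX : yk ∈ X := by
      rw [hyeq]; exact hXconv hxkX hzkX (by linarith) hκ0.le (by ring)
    -- descent
    have hdesc : f xp + ρ * Pf xp ≤ (f yk + ρ * Pf yk) + ⟪Gy, xp - yk⟫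
        + L / 2 * ‖xp - yk‖ ^ 2 := by
      rw [hGydef]
      exact descent_lemma_s9 hXconv hGgrad hL0.le hGLip hykX hxpX
    have hxpy : xp - yk = κ • (zp - zk) := by rw [hxpeq, hyeq]; module
    have hdecomp : ⟪Gy, xp - yk⟫ = (1-κ) * ⟪Gy, xk - yk⟫ + κ * ⟪Gy, zp - yk⟫ := by
      have h : xp - yk = (1-κ) • (xk - yk) + κ • (zp - yk) := by rw [hxpeq]; module
      rw [h, inner_add_right, real_inner_smul_right, real_inner_smul_right]
    have hnormeq : ‖xp - yk‖ ^ 2 = κ ^ 2 * ‖zp - zk‖ ^ 2 := by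
      rw [hxpy, norm_smul, Real.norm_eq_abs, mul_pow, sq_abs]
    have hconv1 : (f yk + ρ * Pf yk) + ⟪Gy, xk - yk⟫ ≤ f xk + ρ * Pf xk := by
      rw [hGydef]
      have := grad_convex_ineq hFconv (hGgrad yk) xk
      linarith
    have hconv2 : (f yk + ρ * Pf yk) + ⟪Gy, xρ - yk⟫ ≤ f xρ + ρ * Pf xρ := by
      rw [hGydef]
      have := grad_convex_ineq hFconv (hGgrad yk) xρ
      linarith
    have hI2 : ⟪Gy, zp - yk⟫ = ⟪Gy, xρ - yk⟫ + ⟪Gy + d, zp - xρ⟫ - ⟪d, zp - xρ⟫ := by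
      have e1 : zp - yk = (xρ - yk) + (zp - xρ) := by module
      have h1 : ⟪Gy, zp - yk⟫ = ⟪Gy, xρ - yk⟫ + ⟪Gy, zp - xρ⟫ := by
        rw [e1, inner_add_right]
      have h2 : ⟪Gy + d, zp - xρ⟫ = ⟪Gy, zp - xρ⟫ + ⟪d, zp - xρ⟫ := inner_add_left _ _ _
      linarith
    have hψconv : ψ xp ≤ (1-κ) * ψ xk + κ * ψ zp := by
      rw [hxpeq]
      exact hψ.2 (Set.mem_univ xk) (Set.mem_univ zp) (by linarith) hκ0.le (by ring)
    have hthree : γ k * (⟪Gy + d, zp⟫ + ψ zp) + ‖zp - zk‖ ^ 2 / 2 + ‖xρ - zp‖ ^ 2 / 2 ≤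
        γ k * (⟪Gy + d, xρ⟫ + ψ xρ) + ‖xρ - zk‖ ^ 2 / 2 := by
      have hmin : ∀ u ∈ X, γ k * (⟪Gy + d, zp⟫ + ψ zp) + ‖zp - zk‖ ^ 2 / 2 ≤
          γ k * (⟪Gy + d, u⟫ + ψ u) + ‖u - zk‖ ^ 2 / 2 := by
        intro u hu
        have := hprox k hk1 hkK ω u hu
        rw [hGydef]
        simpa [add_assoc] using this
      exact three_point hXconv hψ hg0 hzpX hmin hxρX
    -- coefficient identities
    have e1 : β k * γ k * (1 - κ) = (β k - 1) * γ k := by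
      linear_combination (-(γ k)) * hκb
    have e2 : β k * γ k * κ = γ k := by linear_combination (γ k) * hκb
    have e3 : β k * γ k * (L/2) * κ ^ 2 = 1/4 := by
      linear_combination (L * γ k * κ / 2 + 1/4) * hκb + (κ / 4) * h2Lg
    have hbg0 : 0 ≤ β k * γ k := by positivity
    -- multiplied pieces
    have hdesc2 : β k * γ k * (f xp + ρ * Pf xp) ≤
        β k * γ k * (f yk + ρ * Pf yk) + (β k - 1) * γ k * ⟪Gy, xk - yk⟫
        + γ k * ⟪Gy, zp - yk⟫ + ‖zp - zk‖ ^ 2 / 4 := by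
      have h0 : f xp + ρ * Pf xp ≤ (f yk + ρ * Pf yk)
          + ((1-κ) * ⟪Gy, xk - yk⟫ + κ * ⟪Gy, zp - yk⟫)
          + L / 2 * (κ ^ 2 * ‖zp - zk‖ ^ 2) := by
        rw [← hdecomp, ← hnormeq]; linarith only [hdesc]
      have h1 := mul_le_mul_of_nonneg_left h0 hbg0
      refine h1.trans_eq ?_
      linear_combination (⟪Gy, xk - yk⟫ : ℝ) * e1 + (⟪Gy, zp - yk⟫ : ℝ) * e2
        + ‖zp - zk‖ ^ 2 * e3
    have hψ2 : β k * γ k * ψ xp ≤ (β k - 1) * γ k * ψ xk + γ k * ψ zp := by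
      have h1 := mul_le_mul_of_nonneg_left hψconv hbg0
      refine h1.trans_eq ?_
      linear_combination (ψ xk) * e1 + (ψ zp) * e2
    have hconv1m : (β k - 1) * γ k * ((f yk + ρ * Pf yk) + ⟪Gy, xk - yk⟫) ≤
        (β k - 1) * γ k * (f xk + ρ * Pf xk) :=
      mul_le_mul_of_nonneg_left hconv1 (mul_nonneg (by linarith) hg0.le)
    have hconv2m : γ k * ((f yk + ρ * Pf yk) + ⟪Gy, xρ - yk⟫) ≤
        γ k * (f xρ + ρ * Pf xρ) :=
      mul_le_mul_of_nonneg_left hconv2 hg0.le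
    have hI2m : γ k * ⟪Gy, zp - yk⟫ = γ k * ⟪Gy, xρ - yk⟫
        + γ k * ⟪Gy + d, zp - xρ⟫ - γ k * ⟪d, zp - xρ⟫ := by
      rw [hI2]; ring
    have hJm : γ k * ⟪Gy + d, zp - xρ⟫ = γ k * ⟪Gy + d, zp⟫ - γ k * ⟪Gy + d, xρ⟫ := by
      rw [inner_sub_right]; ring
    have hXdm : γ k * ⟪d, zp - xρ⟫ = -(γ k * ⟪d, zk - zp⟫) - γ k * ⟪d, xρ - zk⟫ := by
      have h : zp - xρ = -(zk - zp) - (xρ - zk) := by module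
      rw [h, inner_sub_right, inner_neg_right]; ring
    have hnoise : γ k * ⟪d, zk - zp⟫ ≤ γ k ^ 2 * ‖d‖ ^ 2 + ‖zp - zk‖ ^ 2 / 4 := by
      have h1 : ⟪d, zk - zp⟫ ≤ ‖d‖ * ‖zp - zk‖ := by
        have := real_inner_le_norm d (zk - zp)
        rwa [norm_sub_rev zk zp] at this
      have h2 : γ k * ⟪d, zk - zp⟫ ≤ γ k * (‖d‖ * ‖zp - zk‖) :=
        mul_le_mul_of_nonneg_left h1 hg0.le
      nlinarith only [sq_nonneg (γ k * ‖d‖ - ‖zp - zk‖ / 2), h2]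
    linarith only [hdesc2, hψ2, hconv1m, hconv2m, hI2m, hJm, hXdm, hnoise, hthree]
  -- gap nonnegativity
  have hgap : ∀ k, 1 ≤ k → k ≤ K → ∀ ω,
      0 ≤ (f (x k ω) + ψ (x k ω) + ρ * Pf (x k ω)) - (f xρ + ψ xρ + ρ * Pf xρ) := by
    intro k hk1 hkK ω
    have := hxρopt' (x k ω) (hxX k hk1 hkK ω)
    linarith
  set N : ℕ → Ω → ℝ := fun i ω => γ i ^ 2 * ‖δ i ω‖ ^ 2 + γ i * ⟪δ i ω, xρ - z i ω⟫
    with hNdef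
  -- telescoping
  have tel : ∀ k, 1 ≤ k → k < K → ∀ ω,
      (β k - 1) * γ k * ((f (x k ω) + ψ (x k ω) + ρ * Pf (x k ω))
        - (f xρ + ψ xρ + ρ * Pf xρ)) + ‖xρ - z k ω‖ ^ 2 / 2 ≤
      ‖xρ - x0‖ ^ 2 / 2 + ∑ i ∈ Finset.Ico 1 k, N i ω := by
    intro k
    induction k with
    | zero => omega
    | succ k ih =>
      intro hk1 hkK ω
      rcases Nat.eq_zero_or_pos k with h0 | h0
      · subst h0
        have hβ1 : β 1 = 1 := by rw [hβ 1 le_rfl hkK]; norm_num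
        rw [(hinit ω).2, hβ1]
        simp
      · have hkK' : k < K := by omega
        have hkey := key k h0 hkK' ω
        have hih := ih h0 hkK' ω
        have hco : (β (k+1) - 1) * γ (k+1) ≤ β k * γ k := by
          rw [hβ (k+1) (by omega) hkK, hγ (k+1) (by omega) hkK,
            hβ k h0 hkK', hγ k h0 hkK']
          have hk0 : (0:ℝ) ≤ (k:ℝ) := Nat.cast_nonneg k
          push_cast
          rw [show ((k:ℝ)+1+1)/2 - 1 = ((k:ℝ))/2 by ring]
          rw [div_mul_div_comm, div_mul_div_comm,
            div_le_div_iff₀ (by positivity) (by positivity)]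
          nlinarith only [hk0, hL0]
        have hgp := hgap (k+1) (by omega) (by omega) ω
        have hmono : (β (k+1) - 1) * γ (k+1) *
            ((f (x (k+1) ω) + ψ (x (k+1) ω) + ρ * Pf (x (k+1) ω))
              - (f xρ + ψ xρ + ρ * Pf xρ)) ≤
            β k * γ k * ((f (x (k+1) ω) + ψ (x (k+1) ω) + ρ * Pf (x (k+1) ω))
              - (f xρ + ψ xρ + ρ * Pf xρ)) :=
          mul_le_mul_of_nonneg_right hco hgp
        rw [Finset.sum_Ico_succ_top (h0 : 1 ≤ k)]
        have hNk : N k ω = γ k ^ 2 * ‖δ k ω‖ ^ 2 + γ k * ⟪δ k ω, xρ - z k ω⟫ := rfl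
        linarith only [hkey, hih, hmono, hNk]
  -- last step
  obtain ⟨M, rfl⟩ : ∃ M, K = M + 1 := ⟨K - 1, by omega⟩
  have hM1 : 1 ≤ M := by omega
  have hfinal : ∀ ω, β M * γ M *
      ((f (x (M+1) ω) + ψ (x (M+1) ω) + ρ * Pf (x (M+1) ω))
        - (f xρ + ψ xρ + ρ * Pf xρ)) ≤
      ‖xρ - x0‖ ^ 2 / 2 + ∑ i ∈ Finset.Ico 1 (M+1), N i ω := by
    intro ω
    have hkey := key M hM1 (lt_add_one M) ω
    have htel := tel M hM1 (lt_add_one M) ω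
    rw [Finset.sum_Ico_succ_top (hM1 : 1 ≤ M)]
    have hNM : N M ω = γ M ^ 2 * ‖δ M ω‖ ^ 2 + γ M * ⟪δ M ω, xρ - z M ω⟫ := rfl
    have hr : (0:ℝ) ≤ ‖xρ - z (M+1) ω‖ ^ 2 / 2 := by positivity
    linarith only [hkey, htel, hNM, hr]
  -- integrability of inner-product noise terms
  have hIint : ∀ i, 1 ≤ i → i < M + 1 →
      Integrable (fun ω => ⟪δ i ω, xρ - z i ω⟫) μ := by
    intro i hi1 hi2
    have hmeas : Measurable (fun ω => ⟪δ i ω, xρ - z i ω⟫ : Ω → ℝ) :=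
      (hδmeas i).inner (measurable_const.sub (hzmeas i))
    have hgint : Integrable (fun ω => (‖δ i ω‖ ^ 2 + D ^ 2) / 2) μ :=
      ((hδint i hi1 hi2).add (integrable_const _)).div_const 2
    refine hgint.mono' hmeas.aestronglyMeasurable ?_
    filter_upwards with ω
    have h1 : ‖(⟪δ i ω, xρ - z i ω⟫ : ℝ)‖ ≤ ‖δ i ω‖ * ‖xρ - z i ω‖ := by
      rw [Real.norm_eq_abs]; exact abs_real_inner_le_norm _ _
    have h2 : ‖xρ - z i ω‖ ≤ D := hdiam xρ hxρX (z i ω) (hzX i hi1 (by omega) ω)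
    have h3 : ‖δ i ω‖ * ‖xρ - z i ω‖ ≤ ‖δ i ω‖ * D :=
      mul_le_mul_of_nonneg_left h2 (norm_nonneg _)
    have h4 : ‖δ i ω‖ * D ≤ (‖δ i ω‖ ^ 2 + D ^ 2) / 2 := by
      nlinarith only [sq_nonneg (‖δ i ω‖ - D)]
    linarith
  have hNint : ∀ i ∈ Finset.Ico 1 (M+1), Integrable (N i) μ := by
    intro i hi
    rw [Finset.mem_Ico] at hi
    exact ((hδint i hi.1 hi.2).const_mul _).add ((hIint i hi.1 hi.2).const_mul _)
  have hNval : ∀ i ∈ Finset.Ico 1 (M+1), ∫ ω, N i ω ∂μ ≤ γ i ^ 2 * σ ^ 2 := by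
    intro i hi
    rw [Finset.mem_Ico] at hi
    have : ∫ ω, N i ω ∂μ = γ i ^ 2 * (∫ ω, ‖δ i ω‖ ^ 2 ∂μ)
        + γ i * (∫ ω, ⟪δ i ω, xρ - z i ω⟫ ∂μ) := by
      rw [hNdef]
      rw [integral_add ((hδint i hi.1 hi.2).const_mul _) ((hIint i hi.1 hi.2).const_mul _),
        integral_const_mul, integral_const_mul]
    rw [this, hδmean i hi.1 hi.2, mul_zero, add_zero]
    exact mul_le_mul_of_nonneg_left (hδsq i hi.1 hi.2) (sq_nonneg _)
  -- pointwise bound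
  have hbgv : β M * γ M = ((M:ℝ)+1)^2/(8*L) := by
    rw [hβ M hM1 (lt_add_one M), hγ M hM1 (lt_add_one M)]
    field_simp; ring
  have hM0 : (0:ℝ) < (M:ℝ) + 1 := by positivity
  have hcoef : (0:ℝ) < 8*L/((M:ℝ)+1)^2 := by positivity
  have hptw : ∀ ω, (f (x (M+1) ω) + ψ (x (M+1) ω)) - (f xbar + ψ xbar) ≤
      (8*L/((M:ℝ)+1)^2) * (‖xρ - x0‖ ^ 2 / 2 + ∑ i ∈ Finset.Ico 1 (M+1), N i ω) := by
    intro ω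
    have hPnn : 0 ≤ Pf (x (M+1) ω) := by
      have : (0:ℝ) ≤ ∑ i, max (c i (x (M+1) ω)) 0 ^ 2 :=
        Finset.sum_nonneg fun i _ => by positivity
      rw [hPfdef]; dsimp only; linarith
    have hPxbar : Pf xbar = 0 := by
      rw [hPfdef]; dsimp only
      have : ∀ i : Fin m, max (c i xbar) 0 ^ 2 = 0 := by
        intro i
        rw [max_eq_right (hxbarfeas i)]
        norm_num
      rw [Finset.sum_congr rfl (fun i _ => this i)]
      simp
    have hopt2 : f xρ + ψ xρ + ρ * Pf xρ ≤ f xbar + ψ xbar := by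
      have := hxρopt' xbar hxbarX
      rw [hPxbar] at this
      linarith
    have hgapK := hfinal ω
    have hgap2 : (f (x (M+1) ω) + ψ (x (M+1) ω)) - (f xbar + ψ xbar) ≤
        (f (x (M+1) ω) + ψ (x (M+1) ω) + ρ * Pf (x (M+1) ω))
          - (f xρ + ψ xρ + ρ * Pf xρ) := by nlinarith only [mul_nonneg hρ0.le hPnn, hopt2]
    rw [hbgv] at hgapK
    set gp : ℝ := (f (x (M+1) ω) + ψ (x (M+1) ω) + ρ * Pf (x (M+1) ω))
      - (f xρ + ψ xρ + ρ * Pf xρ) with hgpdef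
    have hid : gp = (8*L/((M:ℝ)+1)^2) * (((M:ℝ)+1)^2/(8*L) * gp) := by
      field_simp
    have := mul_le_mul_of_nonneg_left hgapK hcoef.le
    calc (f (x (M+1) ω) + ψ (x (M+1) ω)) - (f xbar + ψ xbar) ≤ gp := hgap2
      _ = (8*L/((M:ℝ)+1)^2) * (((M:ℝ)+1)^2/(8*L) * gp) := hid
      _ ≤ (8*L/((M:ℝ)+1)^2) * (‖xρ - x0‖ ^ 2 / 2 + ∑ i ∈ Finset.Ico 1 (M+1), N i ω) := this
  -- integral of the majorant
  have hQint : Integrable (fun ω => ‖xρ - x0‖ ^ 2 / 2 + ∑ i ∈ Finset.Ico 1 (M+1), N i ω) μ :=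
    (integrable_const _).add (integrable_finset_sum _ hNint)
  have hDx : ‖xρ - x0‖ ^ 2 ≤ D ^ 2 := by
    have := hdiam xρ hxρX x0 hx0X
    nlinarith only [norm_nonneg (xρ - x0), this, hD]
  have hsumγ : ∑ i ∈ Finset.Ico 1 (M+1), γ i ^ 2 ≤ ((M:ℝ)+1)^3/(16*L^2) := by
    have h1 : ∑ i ∈ Finset.Ico 1 (M+1), γ i ^ 2
        = ∑ i ∈ Finset.Ico 1 (M+1), ((i:ℝ)+1)^2 * (1/(16*L^2)) := by
      refine Finset.sum_congr rfl (fun i hi => ?_)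
      rw [Finset.mem_Ico] at hi
      rw [hγ i hi.1 hi.2]
      field_simp
      ring
    rw [h1, ← Finset.sum_mul]
    have h2 := sum_sq_le_cube (M+1)
    push_cast at h2 ⊢
    have h3 : (0:ℝ) ≤ 1/(16*L^2) := by positivity
    calc (∑ i ∈ Finset.Ico 1 (M+1), ((i:ℝ)+1)^2) * (1/(16*L^2))
        ≤ (((M:ℝ)+1)^3) * (1/(16*L^2)) := mul_le_mul_of_nonneg_right h2 h3
      _ = ((M:ℝ)+1)^3/(16*L^2) := by ring
  have hQval : ∫ ω, (‖xρ - x0‖ ^ 2 / 2 + ∑ i ∈ Finset.Ico 1 (M+1), N i ω) ∂μ ≤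
      D^2/2 + σ^2 * (((M:ℝ)+1)^3/(16*L^2)) := by
    rw [integral_add (integrable_const _) (integrable_finset_sum _ hNint),
      integral_const, integral_finset_sum _ hNint]
    simp only [probReal_univ, measure_univ, ENNReal.toReal_one, smul_eq_mul, one_mul]
    have h1 : ∑ i ∈ Finset.Ico 1 (M+1), ∫ ω, N i ω ∂μ ≤
        ∑ i ∈ Finset.Ico 1 (M+1), γ i ^ 2 * σ ^ 2 := Finset.sum_le_sum hNval
    have h2 : ∑ i ∈ Finset.Ico 1 (M+1), γ i ^ 2 * σ ^ 2
        = (∑ i ∈ Finset.Ico 1 (M+1), γ i ^ 2) * σ ^ 2 := by rw [Finset.sum_mul]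
    have h3 : (∑ i ∈ Finset.Ico 1 (M+1), γ i ^ 2) * σ ^ 2 ≤
        (((M:ℝ)+1)^3/(16*L^2)) * σ ^ 2 :=
      mul_le_mul_of_nonneg_right hsumγ (sq_nonneg σ)
    nlinarith only [h1, h2, h3, hDx]
  -- final algebra
  set sR : ℝ := ((M:ℝ)+1) ^ ((1:ℝ)/2) with hsRdef
  have hs0 : 0 < sR := Real.rpow_pos_of_pos hM0 _
  have hs2 : sR ^ 2 = (M:ℝ)+1 := by
    rw [hsRdef, ← Real.rpow_natCast (((M:ℝ)+1) ^ ((1:ℝ)/2)) 2, ← Real.rpow_mul hM0.le]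
    norm_num
  have hs3 : sR ^ 3 = ρ := by
    rw [hsRdef, ← Real.rpow_natCast (((M:ℝ)+1) ^ ((1:ℝ)/2)) 3, ← Real.rpow_mul hM0.le, hρ]
    push_cast
    norm_num
  have hcast2 : ((M+1:ℕ):ℝ) ^ (-(2:ℝ)) = 1/((M:ℝ)+1)^2 := by
    push_cast
    rw [Real.rpow_neg hM0.le, one_div]
    congr 1
    rw [show ((2:ℝ)) = ((2:ℕ):ℝ) by norm_num, Real.rpow_natCast]
  have hcasthalf : ((M+1:ℕ):ℝ) ^ (-(1:ℝ)/2) = 1/sR := by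
    push_cast
    rw [show (-(1:ℝ)/2) = -((1:ℝ)/2) by norm_num, Real.rpow_neg hM0.le, one_div, hsRdef]
    norm_num
  have hLs : L = Lf + sR^3 * Lc := by rw [hLdef, hs3]
  have hLsne : Lf + sR^3 * Lc ≠ 0 := by positivity
  have halg : (8*L/((M:ℝ)+1)^2) * (D^2/2 + σ^2*(((M:ℝ)+1)^3/(16*L^2))) ≤
      (6*Lc*D^2 + 3*σ^2/Lc) * ((M+1:ℕ):ℝ) ^ (-(1:ℝ)/2)
      + 6*Lf*D^2 * ((M+1:ℕ):ℝ) ^ (-(2:ℝ)) := by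
    rw [hcast2, hcasthalf, ← hs2]
    have hsne : sR ≠ 0 := ne_of_gt hs0
    have e1 : (8*L/(sR^2)^2) * (D^2/2 + σ^2*((sR^2)^3/(16*L^2)))
        = 4*Lf*D^2/sR^4 + 4*Lc*D^2/sR + σ^2*sR^2/(2*L) := by
      rw [hLs]
      field_simp
      ring
    have hb1 : σ^2*sR^2/(2*L) ≤ σ^2/(2*Lc*sR) := by
      rw [div_le_div_iff₀ (by rw [hLs]; positivity) (by positivity), hLs]
      nlinarith only [mul_nonneg (sq_nonneg σ) hLf.le, hs0]
    have key0 : 0 ≤ (6*Lc*D^2 + 3*σ^2/Lc)*(1/sR) + 6*Lf*D^2*(1/(sR^2)^2)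
        - (4*Lf*D^2/sR^4 + 4*Lc*D^2/sR + σ^2/(2*Lc*sR)) := by
      have e2 : (6*Lc*D^2 + 3*σ^2/Lc)*(1/sR) + 6*Lf*D^2*(1/(sR^2)^2)
          - (4*Lf*D^2/sR^4 + 4*Lc*D^2/sR + σ^2/(2*Lc*sR))
          = 2*Lf*D^2/sR^4 + 2*Lc*D^2/sR + (5*σ^2)/(2*Lc*sR) := by
        field_simp
        ring
      rw [e2]
      positivity
    linarith only [e1, hb1, key0]
  -- conclusion
  by_cases hIg : Integrable
      (fun ω => (f (x (M+1) ω) + ψ (x (M+1) ω)) - (f xbar + ψ xbar)) μ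
  · calc ∫ ω, ((f (x (M+1) ω) + ψ (x (M+1) ω)) - (f xbar + ψ xbar)) ∂μ
        ≤ ∫ ω, (8*L/((M:ℝ)+1)^2) * (‖xρ - x0‖ ^ 2 / 2
            + ∑ i ∈ Finset.Ico 1 (M+1), N i ω) ∂μ :=
          integral_mono hIg (hQint.const_mul _) hptw
      _ = (8*L/((M:ℝ)+1)^2) * ∫ ω, (‖xρ - x0‖ ^ 2 / 2
            + ∑ i ∈ Finset.Ico 1 (M+1), N i ω) ∂μ := integral_const_mul _ _
      _ ≤ (8*L/((M:ℝ)+1)^2) * (D^2/2 + σ^2 * (((M:ℝ)+1)^3/(16*L^2))) :=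
          mul_le_mul_of_nonneg_left hQval hcoef.le
      _ ≤ (6*Lc*D^2 + 3*σ^2/Lc) * ((M+1:ℕ):ℝ) ^ (-(1:ℝ)/2)
          + 6*Lf*D^2 * ((M+1:ℕ):ℝ) ^ (-(2:ℝ)) := halg
  · rw [integral_undef hIg]
    have h1 : (0:ℝ) < ((M+1:ℕ):ℝ) ^ (-(1:ℝ)/2) := Real.rpow_pos_of_pos (by positivity) _
    have h2 : (0:ℝ) < ((M+1:ℕ):ℝ) ^ (-(2:ℝ)) := Real.rpow_pos_of_pos (by positivity) _
    positivity
end
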